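/- arXiv:1206.2553 — 2 statements merged into one kernel-verified Lean document; each statement's English description precedes it below -/
import Mathlib

section
/- Let n ≥ 3 be an integer, β ∈ (2, n), Λ ≥ 1, and define u on the exterior region {x ∈ ℝⁿ : |x| > Λ} by u(x) := _Λb(|x|). Then u is differentiable and for every x with |x| > Λ one has ∇u(x) / √(1 + |∇u(x)|²) = −Λ^{β−1} |x|^{−β} x. In particular, the horizontal part of the downward unit normal of the graph of u equals −Λ^{β−1}|x|^{−β} x. -/
/-!
The barrier is a tail integral, so `b'(r) = -((r/Λ)^(2(β-1)) - 1)^(-1/2)`; the tail exists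
because the integrand is `O(s^(1-β))` at infinity and `β > 2`. For the radial function
`u = b ∘ ‖·‖` one has `∇u(x) = b'(‖x‖) x / ‖x‖`, and with `w = (‖x‖/Λ)^(β-1)` the derivative is
`b' = -(w² - 1)^(-1/2)`, for which `b' / √(1 + b'²) = -1/w`; thus the normalized gradient is
`-(Λ/‖x‖)^(β-1) x / ‖x‖ = -Λ^(β-1) ‖x‖^(-β) x`.
-/

open MeasureTheory

/-- The barrier function `_Λb(r) := Λ ∫_{r/Λ}^∞ (s^(2(β-1)) - 1)^(-1/2) ds`. -/
noncomputable def jangBarrier (β Λ r : ℝ) : ℝ :=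
  Λ * ∫ s in Set.Ioi (r / Λ), (s ^ (2 * (β - 1)) - 1) ^ (-(1 : ℝ) / 2)

open Set Filter

theorem continuousAt_rpow_sub_one_rpow_neg_half {p s : ℝ} (hp : 0 < p) (hs : 1 < s) :
    ContinuousAt (fun s : ℝ => (s ^ p - 1) ^ (-(1 : ℝ) / 2)) s := by
  have hsp : 1 < s ^ p := Real.one_lt_rpow hs hp
  exact ((Real.continuousAt_rpow_const s p (Or.inl (by positivity))).sub continuousAt_const)
    |>.rpow_const (Or.inl (sub_pos.mpr hsp).ne')

theorem rpow_sub_one_rpow_neg_half_le {p c s : ℝ} (hp : 0 < p) (hc : 1 < c) (hcs : c < s) :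
    (s ^ p - 1) ^ (-(1 : ℝ) / 2) ≤ (1 - (c ^ p)⁻¹) ^ (-(1 : ℝ) / 2) * s ^ (-(p / 2)) := by
  have hs : 0 < s := by linarith
  have hcp : 1 < c ^ p := Real.one_lt_rpow hc hp
  have hcsp : c ^ p ≤ s ^ p := Real.rpow_le_rpow (by linarith) hcs.le hp.le
  have hK : 0 < 1 - (c ^ p)⁻¹ := sub_pos.mpr (inv_lt_one_of_one_lt₀ hcp)
  -- `s ^ p - 1 = s ^ p (1 - s ^ (-p))` and `s ^ (-p) ≤ c ^ (-p)`
  have hlower : (1 - (c ^ p)⁻¹) * s ^ p ≤ s ^ p - 1 := by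
    have : 1 ≤ s ^ p * (c ^ p)⁻¹ := by
      rw [← div_eq_mul_inv, one_le_div (by linarith)]; exact hcsp
    linarith
  calc (s ^ p - 1) ^ (-(1 : ℝ) / 2)
      ≤ ((1 - (c ^ p)⁻¹) * s ^ p) ^ (-(1 : ℝ) / 2) :=
        Real.rpow_le_rpow_of_nonpos (by positivity) hlower (by norm_num)
    _ = (1 - (c ^ p)⁻¹) ^ (-(1 : ℝ) / 2) * s ^ (-(p / 2)) := by
        rw [Real.mul_rpow hK.le (by positivity), ← Real.rpow_mul hs.le]
        ring_nf

theorem integrableOn_Ioi_rpow_sub_one_rpow_neg_half {p c : ℝ} (hp : 2 < p) (hc : 1 < c) :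
    IntegrableOn (fun s : ℝ => (s ^ p - 1) ^ (-(1 : ℝ) / 2)) (Ioi c) := by
  refine Integrable.mono'
    ((integrableOn_Ioi_rpow_of_lt (by linarith : -(p / 2) < -1) (by linarith)).const_mul
      ((1 - (c ^ p)⁻¹) ^ (-(1 : ℝ) / 2)))
    (ContinuousOn.aestronglyMeasurable (fun s hs =>
      (continuousAt_rpow_sub_one_rpow_neg_half (by linarith) (hc.trans hs)).continuousWithinAt)
      measurableSet_Ioi) ?_
  rw [ae_restrict_iff' measurableSet_Ioi]
  refine ae_of_all _ fun s (hs : c < s) => ?_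
  have hsp : 1 ≤ s ^ p := Real.one_le_rpow (by linarith) (by linarith)
  rw [Real.norm_of_nonneg (Real.rpow_nonneg (sub_nonneg.mpr hsp) _)]
  exact rpow_sub_one_rpow_neg_half_le (by linarith) hc hs

theorem hasDerivAt_integral_Ioi {E : Type*} [NormedAddCommGroup E] [NormedSpace ℝ E]
    [CompleteSpace E] {f : ℝ → E} {c t : ℝ} (hf : IntegrableOn f (Ioi c)) (hct : c < t)
    (hft : ContinuousAt f t) :
    HasDerivAt (fun a => ∫ s in Ioi a, f s) (-f t) t := by
  have htail : (fun a => ∫ s in Ioi a, f s) =ᶠ[nhds t]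
      fun a => (∫ s in Ioi c, f s) - ∫ s in c..a, f s := by
    filter_upwards [Ioi_mem_nhds hct] with a (ha : c < a)
    rw [← intervalIntegral.integral_Ioi_sub_Ioi hf ha.le, sub_sub_cancel]
  refine ((intervalIntegral.integral_hasDerivAt_right ?_ ?_ hft).const_sub _).congr_of_eventuallyEq
    htail
  · exact (intervalIntegrable_iff_integrableOn_Ioc_of_le hct.le).mpr
      (hf.mono_set Ioc_subset_Ioi_self)
  · exact ⟨Ioi c, Ioi_mem_nhds hct, hf.aestronglyMeasurable⟩

theorem hasDerivAt_jangBarrier {β Λ r : ℝ} (hβ : 2 < β) (hΛ : 0 < Λ) (hr : Λ < r) :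
    HasDerivAt (jangBarrier β Λ) (-((r / Λ) ^ (2 * (β - 1)) - 1) ^ (-(1 : ℝ) / 2)) r := by
  have ht : 1 < r / Λ := (one_lt_div hΛ).mpr hr
  have hp : 2 < 2 * (β - 1) := by linarith
  have htail := hasDerivAt_integral_Ioi
    (integrableOn_Ioi_rpow_sub_one_rpow_neg_half hp (by linarith : 1 < (1 + r / Λ) / 2))
    (by linarith) (continuousAt_rpow_sub_one_rpow_neg_half (by linarith) ht)
  exact ((htail.comp r ((hasDerivAt_id r).div_const Λ)).const_mul Λ).congr_deriv
    (by rw [mul_one_div, mul_div_cancel₀ _ hΛ.ne'])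

variable {F : Type*} [NormedAddCommGroup F] [InnerProductSpace ℝ F]

theorem hasGradientAt_norm [CompleteSpace F] {x : F} (hx : x ≠ 0) :
    HasGradientAt (‖·‖) (‖x‖⁻¹ • x) x := by
  have hx' : 0 < ‖x‖ := norm_pos_iff.mpr hx
  have hsqrt : HasDerivAt Real.sqrt (1 / (2 * ‖x‖)) (‖x‖ ^ 2) := by
    have h := Real.hasDerivAt_sqrt (x := ‖x‖ ^ 2) (by positivity)
    rwa [Real.sqrt_sq hx'.le] at h
  have h := hsqrt.comp_hasFDerivAt x (hasStrictFDerivAt_norm_sq x).hasFDerivAt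
  simp only [Function.comp_def, Real.sqrt_sq (norm_nonneg _)] at h
  refine h.congr_fderiv ?_
  ext y
  simp only [smul_apply, coe_innerSL_apply, nsmul_eq_mul, Nat.cast_ofNat, smul_eq_mul,
    map_smul, InnerProductSpace.toDual_apply_apply]
  field_simp

theorem HasDerivAt.hasGradientAt_comp_norm [CompleteSpace F] {φ : ℝ → ℝ} {φ' : ℝ} {x : F}
    (hφ : HasDerivAt φ φ' ‖x‖) (hx : x ≠ 0) :
    HasGradientAt (fun y => φ ‖y‖) ((φ' / ‖x‖) • x) x := by
  have h := hφ.comp_hasFDerivAt x (hasGradientAt_norm hx).hasFDerivAt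
  rw [hasGradientAt_iff_hasFDerivAt, div_eq_mul_inv, mul_smul, map_smul]
  exact h

theorem inv_sqrt_one_add_norm_sq_smul {c : ℝ} {x : F} (hx : x ≠ 0) :
    (√(1 + ‖(c / ‖x‖) • x‖ ^ 2))⁻¹ • (c / ‖x‖) • x = (c / √(1 + c ^ 2) / ‖x‖) • x := by
  have hx' : 0 < ‖x‖ := norm_pos_iff.mpr hx
  rw [norm_smul, Real.norm_eq_abs, abs_div, abs_norm, div_mul_cancel₀ _ hx'.ne', sq_abs,
    smul_smul]
  ring_nf

theorem rpow_neg_half_div_sqrt_one_add_sq {w : ℝ} (hw : 1 < w) :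
    (w ^ 2 - 1) ^ (-(1 : ℝ) / 2) / √(1 + ((w ^ 2 - 1) ^ (-(1 : ℝ) / 2)) ^ 2) = w⁻¹ := by
  have hv : 0 < w ^ 2 - 1 := by nlinarith
  set a := (w ^ 2 - 1) ^ (-(1 : ℝ) / 2)
  have ha : 0 < a := Real.rpow_pos_of_pos hv _
  have ha2 : a ^ 2 * (w ^ 2 - 1) = 1 := by
    rw [← Real.rpow_natCast, ← Real.rpow_mul hv.le, ← Real.rpow_add_one hv.ne']
    norm_num
  have : 1 + a ^ 2 = (w * a) ^ 2 := by linear_combination -ha2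
  rw [this, Real.sqrt_sq (by positivity)]
  field_simp

theorem jangBarrier_graph_normal_general
    (n : ℕ) (β : ℝ) (hβ₁ : 2 < β)
    (Λ : ℝ) (hΛ : 1 ≤ Λ)
    (x : EuclideanSpace ℝ (Fin n)) (hx : Λ < ‖x‖) :
    DifferentiableAt ℝ (fun y : EuclideanSpace ℝ (Fin n) => jangBarrier β Λ ‖y‖) x ∧
    (Real.sqrt (1 + ‖gradient (fun y : EuclideanSpace ℝ (Fin n) =>
        jangBarrier β Λ ‖y‖) x‖ ^ 2))⁻¹ •
        gradient (fun y : EuclideanSpace ℝ (Fin n) => jangBarrier β Λ ‖y‖) x =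
      (-(Λ ^ (β - 1) * ‖x‖ ^ (-β))) • x := by
  have hΛ0 : 0 < Λ := by linarith
  have hr : 0 < ‖x‖ := hΛ0.trans hx
  have hx0 : x ≠ 0 := norm_pos_iff.mp hr
  have hw : 1 < (‖x‖ / Λ) ^ (β - 1) := Real.one_lt_rpow ((one_lt_div hΛ0).mpr hx) (by linarith)
  have hG := (hasDerivAt_jangBarrier hβ₁ hΛ0 hx).hasGradientAt_comp_norm hx0
  refine ⟨hG.differentiableAt, ?_⟩
  rw [hG.gradient, inv_sqrt_one_add_norm_sq_smul hx0, mul_comm 2 (β - 1),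
    Real.rpow_mul (by positivity), Real.rpow_two, neg_sq, neg_div,
    rpow_neg_half_div_sqrt_one_add_sq hw, Real.div_rpow hr.le hΛ0.le, Real.rpow_neg hr.le]
  congr 1
  have hpow : ‖x‖ ^ β = ‖x‖ ^ (β - 1) * ‖x‖ := by
    rw [← Real.rpow_add_one hr.ne']; ring_nf
  rw [hpow]
  field_simp

/-- Let `n ≥ 3`, `β ∈ (2, n)`, `Λ ≥ 1` and `u(x) := _Λb(|x|)` on
`{x ∈ ℝⁿ : |x| > Λ}`. Then `u` is differentiable and for every such `x`,
`∇u(x)/√(1 + |∇u(x)|²) = -Λ^(β-1) |x|^(-β) x`. -/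
theorem jangBarrier_graph_normal
    (n : ℕ) (hn : 3 ≤ n) (β : ℝ) (hβ₁ : 2 < β) (hβ₂ : β < n)
    (Λ : ℝ) (hΛ : 1 ≤ Λ)
    (x : EuclideanSpace ℝ (Fin n)) (hx : Λ < ‖x‖) :
    DifferentiableAt ℝ (fun y : EuclideanSpace ℝ (Fin n) => jangBarrier β Λ ‖y‖) x ∧
    (Real.sqrt (1 + ‖gradient (fun y : EuclideanSpace ℝ (Fin n) =>
        jangBarrier β Λ ‖y‖) x‖ ^ 2))⁻¹ •
        gradient (fun y : EuclideanSpace ℝ (Fin n) => jangBarrier β Λ ‖y‖) x =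
      (-(Λ ^ (β - 1) * ‖x‖ ^ (-β))) • x :=
  jangBarrier_graph_normal_general n β hβ₁ Λ hΛ x hx
end

section
/- Let n ≥ 3 be an integer, a ∈ ℝ, C > 0, and let u be a C¹ function on {x ∈ ℝⁿ : |x| > 1} with |u(x) − 1 − a|x|^{2−n}| ≤ C |x|^{1−n} and |∇u(x) − a ∇(|x|^{2−n})| ≤ C |x|^{−n}. Then the flux integrals converge: lim_{r→∞} ∫_{{|x| = r}} u(x) · (∇u(x) · x/r) dH^{n−1} = (2 − n) a |𝕊^{n−1}|. -/
/-!
On the sphere of radius `r > 1` the hypotheses give `u = 1 + O(r^(2-n))` and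
`∂ᵣu = (2-n) a r^(1-n) + O(r^(-n))`, hence `u ∂ᵣu = (2-n) a r^(1-n) + O(r^(-n))`; the cross term
`O(r^(3-2n))` is absorbed into `O(r^(-n))` because `n ≥ 3`. Since `H^(n-1)` of the sphere of
radius `r` is `r^(n-1)` times that of the unit sphere, the flux is `(2-n) a |𝕊^(n-1)| + O(1/r)`.
That `|𝕊^(n-1)|` is finite follows from covering the sphere by two inverse stereographic images
of a closed ball of a hyperplane, on which these maps are Lipschitz.
-/

open MeasureTheory Filter Metric Module InnerProductSpace

section Gradient
variable {E : Type*} [NormedAddCommGroup E] [InnerProductSpace ℝ E] [CompleteSpace E]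

lemma hasGradientAt_norm_rpow (p : ℝ) {x : E} (hx : x ≠ 0) :
    HasGradientAt (fun y : E => ‖y‖ ^ p) ((p * ‖x‖ ^ (p - 2)) • x) x := by
  have hsq : (‖x‖ ^ 2) ^ (p / 2 - 1) = ‖x‖ ^ (p - 2) := by
    rw [← Real.rpow_natCast, ← Real.rpow_mul (norm_nonneg x)]
    ring_nf
  have h := (hasStrictFDerivAt_norm_sq x).hasFDerivAt.rpow_const (p := p / 2)
    (Or.inl (by positivity))
  rw [hasGradientAt_iff_hasFDerivAt]
  convert h using 1
  · rfl
  · ext y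
    rw [← Real.rpow_natCast, ← Real.rpow_mul (norm_nonneg y)]
    ring_nf
  · ext w
    simp [hsq]
    ring

lemma real_inner_gradient_norm_rpow_self (p : ℝ) {x : E} (hx : x ≠ 0) :
    ⟪gradient (fun y : E => ‖y‖ ^ p) x, x⟫_ℝ = p * ‖x‖ ^ p := by
  have hx' : 0 < ‖x‖ := norm_pos_iff.mpr hx
  rw [(hasGradientAt_norm_rpow p hx).gradient, real_inner_smul_left,
    real_inner_self_eq_norm_sq, mul_assoc, ← Real.rpow_natCast, ← Real.rpow_add hx']
  norm_num

lemma abs_inner_div_norm_sub_le_norm_sub_smul_gradient (g : E) (a p : ℝ) {x : E} (hx : x ≠ 0) :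
    |⟪g, x⟫_ℝ / ‖x‖ - p * a * ‖x‖ ^ (p - 1)|
      ≤ ‖g - a • gradient (fun y : E => ‖y‖ ^ p) x‖ := by
  have hx' : 0 < ‖x‖ := norm_pos_iff.mpr hx
  have hradial : ⟪g, x⟫_ℝ / ‖x‖ - p * a * ‖x‖ ^ (p - 1)
      = ⟪g - a • gradient (fun y : E => ‖y‖ ^ p) x, x⟫_ℝ / ‖x‖ := by
    rw [inner_sub_left, real_inner_smul_left, real_inner_gradient_norm_rpow_self p hx,
      Real.rpow_sub_one hx'.ne']
    field_simp
  rw [hradial, abs_div, abs_norm, div_le_iff₀ hx']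
  exact abs_real_inner_le_norm _ _

end Gradient

lemma abs_mul_sub_le_of_abs_sub_le {p a C r v w : ℝ} (hp : 3 ≤ p) (hr : 1 ≤ r)
    (hv : |v - 1 - a * r ^ (2 - p)| ≤ C * r ^ (1 - p))
    (hw : |w - (2 - p) * a * r ^ (1 - p)| ≤ C * r ^ (-p)) :
    |v * w - (2 - p) * a * r ^ (1 - p)|
      ≤ ((|a| + C) * |(2 - p) * a| + (1 + |a| + C) * C) * r ^ (-p) := by
  set c := (2 - p) * a
  have hr0 : 0 < r := by linarith
  have hq : 0 < r ^ (1 - p) := by positivity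
  have hC : 0 ≤ C := nonneg_of_mul_nonneg_left ((abs_nonneg _).trans hv) hq
  have hqs : r ^ (1 - p) ≤ r ^ (2 - p) := Real.rpow_le_rpow_of_exponent_le hr (by linarith)
  have hs1 : r ^ (2 - p) ≤ 1 := Real.rpow_le_one_of_one_le_of_nonpos hr (by linarith)
  have hsq : r ^ (2 - p) * r ^ (1 - p) ≤ r ^ (-p) := by
    rw [← Real.rpow_add hr0]
    exact Real.rpow_le_rpow_of_exponent_le hr (by linarith)
  have hv1 : |v - 1| ≤ (|a| + C) * r ^ (2 - p) := by
    calc |v - 1| ≤ |v - 1 - a * r ^ (2 - p)| + |a * r ^ (2 - p)| := by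
          linarith [abs_sub_abs_le_abs_sub (v - 1) (a * r ^ (2 - p))]
      _ ≤ C * r ^ (1 - p) + |a| * r ^ (2 - p) := by
        rw [abs_mul, abs_of_pos (hq.trans_le hqs)]
        gcongr
      _ ≤ (|a| + C) * r ^ (2 - p) := by nlinarith
  have hv2 : |v| ≤ 1 + |a| + C := by
    calc |v| ≤ |v - 1| + |(1 : ℝ)| := by linarith [abs_sub_abs_le_abs_sub v 1]
      _ ≤ 1 + |a| + C := by
        rw [abs_one]
        nlinarith [abs_nonneg a]
  calc |v * w - c * r ^ (1 - p)|
        = |(v - 1) * (c * r ^ (1 - p)) + v * (w - c * r ^ (1 - p))| := by ring_nf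
    _ ≤ |v - 1| * (|c| * r ^ (1 - p)) + |v| * |w - c * r ^ (1 - p)| := by
        rw [← abs_of_pos hq, ← abs_mul, ← abs_mul, ← abs_mul, abs_of_pos hq]
        exact abs_add_le _ _
    _ ≤ (|a| + C) * r ^ (2 - p) * (|c| * r ^ (1 - p)) + (1 + |a| + C) * (C * r ^ (-p)) := by
        gcongr
    _ = (|a| + C) * |c| * (r ^ (2 - p) * r ^ (1 - p)) + (1 + |a| + C) * C * r ^ (-p) := by ring
    _ ≤ (|a| + C) * |c| * r ^ (-p) + (1 + |a| + C) * C * r ^ (-p) := by gcongr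
    _ = ((|a| + C) * |c| + (1 + |a| + C) * C) * r ^ (-p) := by ring

lemma norm_setIntegral_sub_measureReal_smul_le {X F : Type*} [MeasurableSpace X]
    [NormedAddCommGroup F] [NormedSpace ℝ F] [CompleteSpace F] {μ : Measure X} {s : Set X}
    {f : X → F} {c : F} {ε : ℝ} (hs : MeasurableSet s) (hμs : μ s < ⊤)
    (hf : AEStronglyMeasurable f (μ.restrict s)) (hε : ∀ x ∈ s, ‖f x - c‖ ≤ ε) :
    ‖∫ x in s, f x ∂μ - μ.real s • c‖ ≤ ε * μ.real s := by
  have : IsFiniteMeasure (μ.restrict s) := ⟨by rwa [Measure.restrict_apply_univ]⟩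
  have hfc : IntegrableOn (fun x => f x - c) s μ :=
    .of_bound hμs (hf.sub aestronglyMeasurable_const) ε (ae_restrict_of_forall_mem hs hε)
  have hf : IntegrableOn f s μ :=
    (hfc.add (integrable_const c)).congr_fun (fun x _ => sub_add_cancel (f x) c) hs
  rw [← setIntegral_const, ← integral_sub hf (integrable_const c)]
  exact norm_setIntegral_le_of_norm_le_const hμs hε

lemma hausdorffMeasure_sphere_zero {E : Type*} [NormedAddCommGroup E] [NormedSpace ℝ E]
    [MeasurableSpace E] [BorelSpace E] {d : ℝ} (hd : 0 ≤ d) {r : ℝ} (hr : 0 < r) :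
    μH[d] (sphere (0 : E) r) = ENNReal.ofReal (r ^ d) * μH[d] (sphere (0 : E) 1) := by
  have h := Measure.hausdorffMeasure_smul₀ hd hr.ne' (sphere (0 : E) 1)
  rw [smul_sphere' hr.ne', smul_zero, Real.norm_of_nonneg hr.le, mul_one] at h
  rw [h, ENNReal.smul_def, smul_eq_mul, ← ENNReal.ofReal_coe_nnreal, NNReal.coe_rpow, coe_nnnorm,
    Real.norm_of_nonneg hr.le]

section Sphere
variable {E : Type*} [NormedAddCommGroup E] [InnerProductSpace ℝ E]

lemma mem_image_stereoInvFunAux_of_inner_nonpos {v x : E} (hv : ‖v‖ = 1) (hx : ‖x‖ = 1)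
    (hvx : ⟪v, x⟫_ℝ ≤ 0) :
    x ∈ (stereoInvFunAux v ∘ Subtype.val) '' closedBall (0 : (ℝ ∙ v)ᗮ) 2 := by
  have hxs : x ∈ sphere (0 : E) 1 := by simpa using hx
  have hxv : x ≠ v := by
    rintro rfl
    rw [real_inner_self_eq_norm_sq, hv] at hvx
    norm_num at hvx
  refine ⟨stereoToFun v x, ?_, congrArg Subtype.val (stereo_left_inv hv (x := ⟨x, hxs⟩) hxv)⟩
  have hproj := (ℝ ∙ v)ᗮ.norm_orthogonalProjectionOnto_apply_le x
  have hcoef : 2 / (1 - ⟪v, x⟫_ℝ) ≤ 2 := div_le_self zero_le_two (by linarith)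
  rw [mem_closedBall_zero_iff, stereoToFun_apply, innerSL_apply_apply, norm_smul,
    Real.norm_of_nonneg (div_nonneg zero_le_two (by linarith))]
  calc 2 / (1 - ⟪v, x⟫_ℝ) * ‖(ℝ ∙ v)ᗮ.orthogonalProjectionOnto x‖ ≤ 2 * 1 := by
        gcongr
        exact hproj.trans hx.le
    _ = 2 := mul_one 2

variable [MeasurableSpace E] [BorelSpace E]

lemma hausdorffMeasure_image_stereoInvFunAux_lt_top {m : ℕ} [Fact (finrank ℝ E = m + 1)]
    {v : E} (hv : v ≠ 0) :
    μH[m] ((stereoInvFunAux v ∘ Subtype.val) '' closedBall (0 : (ℝ ∙ v)ᗮ) 2) < ⊤ := by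
  have : FiniteDimensional ℝ E := .of_fact_finrank_eq_succ m
  obtain ⟨K, hK⟩ := ((contDiff_stereoInvFunAux (m := 1)).comp
    (ℝ ∙ v)ᗮ.subtypeL.contDiff).contDiffOn.exists_lipschitzOnWith one_ne_zero
    (convex_closedBall 0 2) (isCompact_closedBall 0 2)
  have hball : μH[m] (closedBall (0 : (ℝ ∙ v)ᗮ) 2) < ⊤ := by
    rw [← Submodule.finrank_orthogonal_span_singleton (𝕜 := ℝ) (n := m) hv]
    exact (isCompact_closedBall _ _).measure_lt_top
  calc _ ≤ (K : ENNReal) ^ (m : ℝ) * μH[m] (closedBall (0 : (ℝ ∙ v)ᗮ) 2) :=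
        hK.hausdorffMeasure_image_le (Nat.cast_nonneg m)
    _ < ⊤ := by finiteness

theorem hausdorffMeasure_sphere_lt_top {m : ℕ} [Fact (finrank ℝ E = m + 1)] :
    μH[m] (sphere (0 : E) 1) < ⊤ := by
  have : FiniteDimensional ℝ E := .of_fact_finrank_eq_succ m
  have : Nontrivial E := Module.nontrivial_of_finrank_eq_succ (R := ℝ) (n := m) Fact.out
  obtain ⟨v, hv⟩ := exists_norm_eq E zero_le_one
  have hv0 : v ≠ 0 := norm_ne_zero_iff.mp (by rw [hv]; exact one_ne_zero)
  have hcover : sphere (0 : E) 1 ⊆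
      (stereoInvFunAux v ∘ Subtype.val) '' closedBall (0 : (ℝ ∙ v)ᗮ) 2 ∪
      (stereoInvFunAux (-v) ∘ Subtype.val) '' closedBall (0 : (ℝ ∙ (-v))ᗮ) 2 := by
    intro x hx
    rw [mem_sphere_zero_iff_norm] at hx
    rcases le_total ⟪v, x⟫_ℝ 0 with h | h
    · exact Or.inl (mem_image_stereoInvFunAux_of_inner_nonpos hv hx h)
    · refine Or.inr (mem_image_stereoInvFunAux_of_inner_nonpos (by rwa [norm_neg]) hx ?_)
      rwa [inner_neg_left, neg_nonpos]
  exact (measure_mono hcover).trans_lt (measure_union_lt_top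
    (hausdorffMeasure_image_stereoInvFunAux_lt_top hv0)
    (hausdorffMeasure_image_stereoInvFunAux_lt_top (neg_ne_zero.mpr hv0)))

end Sphere

section Flux
variable {E : Type*} [NormedAddCommGroup E] [InnerProductSpace ℝ E] [CompleteSpace E]
  {p a C : ℝ} {u : E → ℝ}

lemma abs_flux_integrand_sub_le (hp : 3 ≤ p)
    (hu0 : ∀ x : E, 1 < ‖x‖ → |u x - 1 - a * ‖x‖ ^ (2 - p)| ≤ C * ‖x‖ ^ (1 - p))
    (hu1 : ∀ x : E, 1 < ‖x‖ →
      ‖gradient u x - a • gradient (fun y : E => ‖y‖ ^ (2 - p)) x‖ ≤ C * ‖x‖ ^ (-p))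
    {x : E} (hx : 1 < ‖x‖) :
    |u x * (⟪gradient u x, x⟫_ℝ / ‖x‖) - (2 - p) * a * ‖x‖ ^ (1 - p)|
      ≤ ((|a| + C) * |(2 - p) * a| + (1 + |a| + C) * C) * ‖x‖ ^ (-p) := by
  have hx0 : x ≠ 0 := norm_pos_iff.mp (one_pos.trans hx)
  refine abs_mul_sub_le_of_abs_sub_le hp hx.le (hu0 x hx) ?_
  have h := abs_inner_div_norm_sub_le_norm_sub_smul_gradient (gradient u x) a (2 - p) hx0
  rw [show 2 - p - 1 = 1 - p by ring] at h
  exact h.trans (hu1 x hx)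

variable [MeasurableSpace E] [BorelSpace E]

theorem exists_abs_setIntegral_flux_sub_le (hp : 3 ≤ p)
    (hS : μH[p - 1] (sphere (0 : E) 1) < ⊤) (hu : ContDiffOn ℝ 1 u {x : E | 1 < ‖x‖})
    (hu0 : ∀ x : E, 1 < ‖x‖ → |u x - 1 - a * ‖x‖ ^ (2 - p)| ≤ C * ‖x‖ ^ (1 - p))
    (hu1 : ∀ x : E, 1 < ‖x‖ →
      ‖gradient u x - a • gradient (fun y : E => ‖y‖ ^ (2 - p)) x‖ ≤ C * ‖x‖ ^ (-p)) :
    ∃ K : ℝ, ∀ r : ℝ, 1 < r →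
      |∫ x in sphere (0 : E) r, u x * (⟪gradient u x, x⟫_ℝ / r) ∂μH[p - 1]
        - (2 - p) * a * μH[p - 1].real (sphere (0 : E) 1)| ≤ K / r := by
  set σ := μH[p - 1].real (sphere (0 : E) 1)
  set K := (|a| + C) * |(2 - p) * a| + (1 + |a| + C) * C
  refine ⟨K * σ, fun r hr => ?_⟩
  have hr0 : 0 < r := one_pos.trans hr
  have hscale := hausdorffMeasure_sphere_zero (E := E) (by linarith : 0 ≤ p - 1) hr0
  have hfinite : μH[p - 1] (sphere (0 : E) r) < ⊤ := by
    rw [hscale]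
    exact ENNReal.mul_lt_top ENNReal.ofReal_lt_top hS
  have hσr : μH[p - 1].real (sphere (0 : E) r) = r ^ (p - 1) * σ := by
    rw [measureReal_def, hscale, ENNReal.toReal_mul, ENNReal.toReal_ofReal (by positivity)]
    rfl
  have hΩ : IsOpen {x : E | 1 < ‖x‖} := isOpen_lt continuous_const continuous_norm
  have hgrad : ContinuousOn (gradient u) {x : E | 1 < ‖x‖} :=
    (toDual ℝ E).symm.continuous.comp_continuousOn (hu.continuousOn_fderiv_of_isOpen hΩ le_rfl)
  have hcont : ContinuousOn (fun x => u x * (⟪gradient u x, x⟫_ℝ / r)) {x : E | 1 < ‖x‖} :=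
    hu.continuousOn.mul ((hgrad.inner continuousOn_id).div_const r)
  have hsub : sphere (0 : E) r ⊆ {x : E | 1 < ‖x‖} := fun x hx => by
    rwa [Set.mem_ofPred_eq, mem_sphere_zero_iff_norm.mp hx]
  have hbound : ∀ x ∈ sphere (0 : E) r,
      ‖u x * (⟪gradient u x, x⟫_ℝ / r) - (2 - p) * a * r ^ (1 - p)‖ ≤ K * r ^ (-p) := by
    intro x hx
    rw [mem_sphere_zero_iff_norm] at hx
    subst hx
    exact abs_flux_integrand_sub_le hp hu0 hu1 hr
  have h := norm_setIntegral_sub_measureReal_smul_le isClosed_sphere.measurableSet hfinite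
    ((hcont.mono hsub).aestronglyMeasurable isClosed_sphere.measurableSet) hbound
  have hmain : r ^ (p - 1) * σ * ((2 - p) * a * r ^ (1 - p)) = (2 - p) * a * σ := by
    rw [mul_comm, mul_assoc, ← mul_assoc (r ^ (1 - p)), ← Real.rpow_add hr0]
    norm_num
  have herror : K * r ^ (-p) * (r ^ (p - 1) * σ) = K * σ / r := by
    rw [show K * r ^ (-p) * (r ^ (p - 1) * σ) = K * σ * (r ^ (-p) * r ^ (p - 1)) by ring,
      ← Real.rpow_add hr0, show -p + (p - 1) = -1 by ring, Real.rpow_neg_one, div_eq_mul_inv]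
  rwa [hσr, smul_eq_mul, Real.norm_eq_abs, hmain, herror] at h

end Flux

theorem flux_integral_limit_general
    (n : ℕ) (hn : 3 ≤ n) (a C : ℝ)
    (u : EuclideanSpace ℝ (Fin n) → ℝ)
    (hu : ContDiffOn ℝ 1 u {x : EuclideanSpace ℝ (Fin n) | 1 < ‖x‖})
    (hu0 : ∀ x : EuclideanSpace ℝ (Fin n), 1 < ‖x‖ →
      |u x - 1 - a * ‖x‖ ^ ((2 : ℝ) - n)| ≤ C * ‖x‖ ^ ((1 : ℝ) - n))
    (hu1 : ∀ x : EuclideanSpace ℝ (Fin n), 1 < ‖x‖ →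
      ‖gradient u x - a • gradient
        (fun y : EuclideanSpace ℝ (Fin n) => ‖y‖ ^ ((2 : ℝ) - n)) x‖ ≤ C * ‖x‖ ^ (-(n : ℝ))) :
    Tendsto
      (fun r : ℝ =>
        ∫ x in {x : EuclideanSpace ℝ (Fin n) | ‖x‖ = r},
          u x * ((inner ℝ (gradient u x) x : ℝ) / r) ∂(μH[(n : ℝ) - 1]))
      atTop
      (nhds ((2 - (n : ℝ)) * a *
        (μH[(n : ℝ) - 1] {x : EuclideanSpace ℝ (Fin n) | ‖x‖ = 1}).toReal)) := by
  have : Fact (finrank ℝ (EuclideanSpace ℝ (Fin n)) = (n - 1) + 1) := ⟨by simp; omega⟩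
  have hS : μH[(n : ℝ) - 1] (sphere (0 : EuclideanSpace ℝ (Fin n)) 1) < ⊤ := by
    simpa [Nat.cast_sub (by omega : 1 ≤ n)] using hausdorffMeasure_sphere_lt_top (m := n - 1)
  obtain ⟨K, hK⟩ :=
    exists_abs_setIntegral_flux_sub_le (by exact_mod_cast hn) hS hu hu0 hu1
  have hsphere (r : ℝ) : {x : EuclideanSpace ℝ (Fin n) | ‖x‖ = r} = sphere 0 r :=
    Set.ext fun _ => mem_sphere_zero_iff_norm.symm
  simp_rw [hsphere, ← measureReal_def]
  rw [tendsto_iff_dist_tendsto_zero]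
  refine squeeze_zero' (Eventually.of_forall fun _ => dist_nonneg) ?_
    (tendsto_id.const_div_atTop K)
  filter_upwards [eventually_gt_atTop 1] with r hr
  exact hK r hr

/-- Let `n ≥ 3`, `a ∈ ℝ`, `C > 0`, and let `u` be `C¹` on `{|x| > 1}` with
`|u(x) - 1 - a|x|^(2-n)| ≤ C|x|^(1-n)` and `|∇u(x) - a∇(|x|^(2-n))| ≤ C|x|^(-n)`. Then the
flux integrals converge:
`lim_{r→∞} ∫_{|x|=r} u (∇u · x/r) dH^{n-1} = (2-n) a |𝕊^{n-1}|`. -/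
theorem flux_integral_limit
    (n : ℕ) (hn : 3 ≤ n) (a C : ℝ) (hC : 0 < C)
    (u : EuclideanSpace ℝ (Fin n) → ℝ)
    (hu : ContDiffOn ℝ 1 u {x : EuclideanSpace ℝ (Fin n) | 1 < ‖x‖})
    (hu0 : ∀ x : EuclideanSpace ℝ (Fin n), 1 < ‖x‖ →
      |u x - 1 - a * ‖x‖ ^ ((2 : ℝ) - n)| ≤ C * ‖x‖ ^ ((1 : ℝ) - n))
    (hu1 : ∀ x : EuclideanSpace ℝ (Fin n), 1 < ‖x‖ →
      ‖gradient u x - a • gradient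
        (fun y : EuclideanSpace ℝ (Fin n) => ‖y‖ ^ ((2 : ℝ) - n)) x‖ ≤ C * ‖x‖ ^ (-(n : ℝ))) :
    Tendsto
      (fun r : ℝ =>
        ∫ x in {x : EuclideanSpace ℝ (Fin n) | ‖x‖ = r},
          u x * ((inner ℝ (gradient u x) x : ℝ) / r) ∂(μH[(n : ℝ) - 1]))
      atTop
      (nhds ((2 - (n : ℝ)) * a *
        (μH[(n : ℝ) - 1] {x : EuclideanSpace ℝ (Fin n) | ‖x‖ = 1}).toReal)) :=
  flux_integral_limit_general n hn a C u hu hu0 hu1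
end
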